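/- arXiv:2112.14189 — 2 statements merged into one kernel-verified Lean document; each statement's English description precedes it below -/
import Mathlib

section
/- Let W be a standard one-dimensional Brownian motion and let f : [0,∞) × ℝ → ℝ be a measurable, strictly positive function such that for all 0 ≤ s ≤ t, almost surely f(s, W_s) · f(t − s, W_t − W_s) = f(t, W_t). Then for every t > 0 the random variable log f(t, W_t) has a Gaussian distribution: there exist m ∈ ℝ and σ² ≥ 0 such that the law of log f(t, W_t) is the (possibly degenerate) normal distribution with mean m and variance σ². -/
open MeasureTheory ProbabilityTheory Real
open scoped NNReal ENNReal

noncomputable section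

variable {Ω : Type*} [mΩ : MeasurableSpace Ω]

/-- The σ-algebra generated by the process `W` up to time `t`. -/
def natSigma (W : ℝ → Ω → ℝ) (t : ℝ) : MeasurableSpace Ω :=
  ⨆ s ∈ Set.Icc (0 : ℝ) t, MeasurableSpace.comap (W s) inferInstance

/-- `W` is a standard one-dimensional Brownian motion under `P`. -/
structure IsStandardBM (P : Measure Ω) (W : ℝ → Ω → ℝ) : Prop where
  isProb : IsProbabilityMeasure P
  init : ∀ ω, W 0 ω = 0
  cont : ∀ ω, Continuous fun t => W t ω
  meas : ∀ t, Measurable (W t)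
  gauss : ∀ s t : ℝ, 0 ≤ s → s ≤ t →
    P.map (fun ω => W t ω - W s ω) = gaussianReal 0 (Real.toNNReal (t - s))
  indep : ∀ s t : ℝ, 0 ≤ s → s ≤ t →
    Indep (MeasurableSpace.comap (fun ω => W t ω - W s ω) inferInstance) (natSigma W s) P

/-- The natural filtration of the process `W`, indexed by nonnegative times. -/
def natFiltration (W : ℝ → Ω → ℝ) (hW : ∀ t, Measurable (W t)) :
    Filtration ℝ≥0 mΩ where
  seq t := natSigma W (t : ℝ)
  mono' s t hst := biSup_mono fun u hu => ⟨hu.1, hu.2.trans (NNReal.coe_le_coe.mpr hst)⟩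
  le' t := iSup₂_le fun s _ => measurable_iff_comap_le.mp (hW s)


/-! Split at `s = t / 2`: `W s` and `W t - W s` are independent `N(0, s)`, so `g = log f(s, ·)` and
`G = log f(t, ·)` satisfy the Pexider equation `g x + g y = G (x + y)` for Lebesgue-a.e. `(x, y)`.
By Fubini, each increment `G (z + a) - G z` is a.e. equal to a constant `c a`; `c` is additive and,
by Steinhaus's theorem applied to a set of positive measure on which `g` is bounded, bounded near
`0`, hence linear. So `G` is a.e. affine and `log f(t, W t) = c W t + d` almost surely. -/

open Filter Set Topology Pointwise

section Pexider

variable {h₁ h₂ G : ℝ → ℝ}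

lemma ae_increment_unique {a k₁ k₂ : ℝ} (hk₁ : ∀ᵐ z, G (z + a) - G z = k₁)
    (hk₂ : ∀ᵐ z, G (z + a) - G z = k₂) : k₁ = k₂ := by
  obtain ⟨z, hz₁, hz₂⟩ := (hk₁.and hk₂).exists
  exact hz₁.symm.trans hz₂

lemma ae_increment_add {c : ℝ → ℝ} (hc : ∀ a, ∀ᵐ z, G (z + a) - G z = c a) (a b : ℝ) :
    c (a + b) = c a + c b := by
  refine ae_increment_unique (hc (a + b)) ?_
  have hca : ∀ᵐ z, G (z + b + a) - G (z + b) = c a := (eventually_add_right_iff volume b).2 (hc a)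
  filter_upwards [hca, hc b] with z hza hzb
  rw [add_comm a b, ← add_assoc]
  linarith

lemma ae_increment_eq_sub {x₁ x₂ : ℝ} (hx₁ : ∀ᵐ y, h₁ x₁ + h₂ y = G (x₁ + y))
    (hx₂ : ∀ᵐ y, h₁ x₂ + h₂ y = G (x₂ + y)) :
    ∀ᵐ z, G (z + (x₁ - x₂)) - G z = h₁ x₁ - h₁ x₂ := by
  have hx₁' : ∀ᵐ z, h₁ x₁ + h₂ (z - x₂) = G (x₁ + (z - x₂)) :=
    (eventually_sub_right_iff volume x₂).2 hx₁
  have hx₂' : ∀ᵐ z, h₁ x₂ + h₂ (z - x₂) = G (x₂ + (z - x₂)) :=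
    (eventually_sub_right_iff volume x₂).2 hx₂
  filter_upwards [hx₁', hx₂'] with z hz₁ hz₂
  rw [add_sub_cancel] at hz₂
  rw [show z + (x₁ - x₂) = x₁ + (z - x₂) by ring]
  linarith

lemma exists_abs_le_sub_self_mem_nhds_zero {h : ℝ → ℝ} (hh : Measurable h) {S : Set ℝ}
    (hS : MeasurableSet S) (hS_ae : ∀ᵐ x, x ∈ S) :
    ∃ M : ℝ, {x ∈ S | |h x| ≤ M} - {x ∈ S | |h x| ≤ M} ∈ 𝓝 0 := by
  have hunion : ⋃ n : ℕ, {x ∈ S | |h x| ≤ n} = S := by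
    ext x
    simpa using fun _ => exists_nat_ge |h x|
  have hS_pos : volume S ≠ 0 := fun h0 => by
    obtain ⟨x, hxS, hx⟩ := ((measure_eq_zero_iff_ae_notMem.1 h0).and hS_ae).exists
    exact hxS hx
  rw [← hunion, Ne, measure_iUnion_null_iff] at hS_pos
  push Not at hS_pos
  obtain ⟨n, hn⟩ := hS_pos
  exact ⟨n, Measure.sub_mem_nhds_zero_of_addHaar_pos volume _
    (hS.inter (measurableSet_le hh.abs measurable_const)) (pos_iff_ne_zero.2 hn)⟩

lemma exists_ae_eq_affine_of_ae_increment (hG : Measurable G) (k : ℝ)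
    (hk : ∀ a, ∀ᵐ z, G (z + a) - G z = k * a) : ∃ d, ∀ᵐ z, G z = k * z + d := by
  have hmeas : MeasurableSet {p : ℝ × ℝ | G (p.2 + p.1) - G p.2 = k * p.1} := by
    apply measurableSet_eq_fun <;> fun_prop
  obtain ⟨z₀, hz₀⟩ :=
    ((Measure.ae_ae_comm (μ := volume) (ν := volume) hmeas).1 (ae_of_all _ hk)).exists
  have hz₀' : ∀ᵐ z, G (z₀ + (z - z₀)) - G z₀ = k * (z - z₀) :=
    (eventually_sub_right_iff volume z₀).2 hz₀
  refine ⟨G z₀ - k * z₀, ?_⟩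
  filter_upwards [hz₀'] with z hz
  rw [add_sub_cancel] at hz
  linarith

theorem exists_ae_eq_affine_of_ae_add_eq (hh₁ : Measurable h₁) (hG : Measurable G)
    (heq : ∀ᵐ p : ℝ × ℝ, h₁ p.1 + h₂ p.2 = G (p.1 + p.2)) :
    ∃ k d : ℝ, ∀ᵐ z, G z = k * z + d := by
  rw [Measure.volume_eq_prod] at heq
  obtain ⟨S, hS_ae, hS, hS_good⟩ : ∃ S, (∀ᵐ x, x ∈ S) ∧ MeasurableSet S ∧
      ∀ x ∈ S, ∀ᵐ y, h₁ x + h₂ y = G (x + y) :=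
    (Measure.ae_ae_of_ae_prod heq).exists_measurable_mem
  have hincr : ∀ a, ∃ k, ∀ᵐ z, G (z + a) - G z = k := by
    intro a
    obtain ⟨x, hx, hxa⟩ : ∃ x, x ∈ S ∧ x - a ∈ S :=
      (hS_ae.and ((eventually_sub_right_iff volume a).2 hS_ae)).exists
    refine ⟨h₁ x - h₁ (x - a), ?_⟩
    simpa only [sub_sub_cancel] using ae_increment_eq_sub (hS_good x hx) (hS_good (x - a) hxa)
  choose c hc using hincr
  let φ : ℝ →+ ℝ := AddMonoidHom.mk' c (ae_increment_add hc)
  have hφ_sub : ∀ x₁ ∈ S, ∀ x₂ ∈ S, φ (x₁ - x₂) = h₁ x₁ - h₁ x₂ :=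
    fun x₁ hx₁ x₂ hx₂ =>
      ae_increment_unique (hc _) (ae_increment_eq_sub (hS_good x₁ hx₁) (hS_good x₂ hx₂))
  obtain ⟨M, hM⟩ := exists_abs_le_sub_self_mem_nhds_zero hh₁ hS hS_ae
  have hφ_cont : Continuous φ := by
    refine φ.continuous_of_isBounded_nhds_zero hM
      ((Metric.isBounded_closedBall (x := 0) (r := 2 * M)).subset ?_)
    rintro _ ⟨_, ⟨x₁, ⟨hx₁, hM₁⟩, x₂, ⟨hx₂, hM₂⟩, rfl⟩, rfl⟩
    rw [Metric.mem_closedBall, dist_zero_right, Real.norm_eq_abs, hφ_sub x₁ hx₁ x₂ hx₂]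
    linarith [abs_sub (h₁ x₁) (h₁ x₂)]
  refine ⟨c 1, exists_ae_eq_affine_of_ae_increment hG (c 1) fun a => ?_⟩
  have hlin : c a = a * c 1 := by simpa [φ] using map_real_smul φ hφ_cont a 1
  simpa [hlin, mul_comm] using hc a

end Pexider

lemma ae_volume_of_ae_indepFun {P : Measure Ω} [IsFiniteMeasure P] {X Y : Ω → ℝ}
    (hX : AEMeasurable X P) (hY : AEMeasurable Y P) (hXY : IndepFun X Y P)
    (hX_ac : volume ≪ P.map X) (hY_ac : volume ≪ P.map Y) {p : ℝ × ℝ → Prop}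
    (hp : MeasurableSet {z | p z}) (h : ∀ᵐ ω ∂P, p (X ω, Y ω)) : ∀ᵐ z : ℝ × ℝ, p z := by
  rw [← ae_map_iff (hX.prodMk hY) hp, (indepFun_iff_map_prod_eq_prod_map_map hX hY).1 hXY] at h
  exact (hX_ac.prod hY_ac).ae_le h

namespace IsStandardBM

variable {P : Measure Ω} {W : ℝ → Ω → ℝ}

lemma hasLaw_sub (hBM : IsStandardBM P W) {s t : ℝ} (hs : 0 ≤ s) (hst : s ≤ t) :
    HasLaw (fun ω => W t ω - W s ω) (gaussianReal 0 (t - s).toNNReal) P :=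
  ⟨((hBM.meas t).sub (hBM.meas s)).aemeasurable, hBM.gauss s t hs hst⟩

lemma hasLaw (hBM : IsStandardBM P W) {t : ℝ} (ht : 0 ≤ t) :
    HasLaw (W t) (gaussianReal 0 t.toNNReal) P := by
  simpa [hBM.init] using hBM.hasLaw_sub le_rfl ht

lemma indepFun_sub (hBM : IsStandardBM P W) {s t : ℝ} (hs : 0 ≤ s) (hst : s ≤ t) :
    IndepFun (W s) (fun ω => W t ω - W s ω) P :=
  (indep_of_indep_of_le_right (hBM.indep s t hs hst)
    (le_biSup (fun u => MeasurableSpace.comap (W u) inferInstance) ⟨hs, le_rfl⟩)).symm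

end IsStandardBM

/-- Under the a.s. multiplicative identity along Brownian motion,
`log f (t, W t)` is Gaussian (possibly degenerate) for every `t > 0`. -/
theorem stmt10 (P : Measure Ω) (W : ℝ → Ω → ℝ) (hBM : IsStandardBM P W)
    (f : ℝ → ℝ → ℝ)
    (hmeas : Measurable (Function.uncurry f))
    (hpos : ∀ u v : ℝ, 0 ≤ u → 0 < f u v)
    (hfe : ∀ s t : ℝ, 0 ≤ s → s ≤ t →
      ∀ᵐ ω ∂P, f s (W s ω) * f (t - s) (W t ω - W s ω) = f t (W t ω)) :
    ∀ t : ℝ, 0 < t → ∃ (m : ℝ) (v : ℝ≥0),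
      P.map (fun ω => Real.log (f t (W t ω))) = gaussianReal m v := by
  intro t ht
  have := hBM.isProb
  set s := t / 2
  have hs : 0 < s := half_pos ht
  have hst : s ≤ t := half_le_self ht.le
  have hts : t - s = s := sub_half t
  have hlogf : ∀ u, Measurable fun x => Real.log (f u x) := fun u => by fun_prop
  have hlaw_ac : ∀ {X : Ω → ℝ}, HasLaw X (gaussianReal 0 s.toNNReal) P → volume ≪ P.map X :=
    fun hX => hX.map_eq ▸ gaussianReal_absolutelyContinuous' 0 (by simpa using hs)
  have hlog_add : ∀ᵐ z : ℝ × ℝ,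
      Real.log (f s z.1) + Real.log (f s z.2) = Real.log (f t (z.1 + z.2)) := by
    have hY := hBM.hasLaw_sub hs.le hst
    rw [hts] at hY
    refine ae_volume_of_ae_indepFun (hBM.meas s).aemeasurable hY.aemeasurable
      (hBM.indepFun_sub hs.le hst) (hlaw_ac (hBM.hasLaw hs.le)) (hlaw_ac hY)
      (measurableSet_eq_fun (by fun_prop) (by fun_prop)) ?_
    filter_upwards [hfe s t hs.le hst] with ω hω
    rw [hts] at hω
    rw [← Real.log_mul (hpos _ _ hs.le).ne' (hpos _ _ hs.le).ne', hω, add_sub_cancel]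
  obtain ⟨k, d, hkd⟩ := exists_ae_eq_affine_of_ae_add_eq (hlogf s) (hlogf t)
    (h₂ := fun y => Real.log (f s y)) hlog_add
  have hWt := hBM.hasLaw ht.le
  have hkd' : (fun ω => Real.log (f t (W t ω))) =ᵐ[P] fun ω => k * W t ω + d :=
    ae_of_ae_map (p := fun x => Real.log (f t x) = k * x + d) hWt.aemeasurable <| hWt.map_eq ▸
      (gaussianReal_absolutelyContinuous 0 (by simpa using ht)).ae_le hkd
  exact ⟨_, _, ((gaussianReal_add_const (gaussianReal_const_mul hWt k) d).congr hkd').map_eq⟩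

end
end

section
/- Let W be a standard one-dimensional Brownian motion with natural filtration ℱ^W = (ℱ^W_t)_{t≥0}, and let f : [0,∞) × ℝ → ℝ be a continuous, strictly positive function with f(0,0) = 1. Suppose there exist constants λ₁, λ₂ ∈ ℝ such that the three processes t ↦ f(t, W_t) e^{−λ₁ t}, t ↦ f(t, W_t)² e^{−λ₂ t}, and t ↦ f(4t, 2W_t + t) e^{−λ₂ t} are martingales with respect to ℱ^W. Then there exists a constant c ∈ ℝ such that f(u, v) = exp(c v − (c/2) u) for all u ≥ 0 and v ∈ ℝ. -/
/-!
By the Markov property, a martingale of the form `φ (t, W t)` satisfies the Gaussian averaging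
identity `∫ φ (t, x + y) dN(0, t - s)(y) = φ (s, x)` for almost every `x`. Applied to the first
martingale on `[a, a + 4u]` and to the third on `[a/4, a/4 + u]` (where
`2 (W (a/4 + u) - W (a/4))` has the law of `W (4u)`), both identities average `f (a + 4u, ·)`
against the same Gaussian, which forces `f (a, w + u) = e^{cu} f (a, w)` with `c = λ₂ - 4 λ₁`
(first for `a > 0`, then for `a = 0` by continuity), hence `f (a, w) = f (a, 0) e^{cw}`.
Taking expectations in the first two martingales then gives `f (t, 0) = e^{(λ₁ - c²/2) t}` and
`λ₂ = 2 λ₁ + c²`, and with `c = λ₂ - 4 λ₁` this is `λ₁ - c²/2 = -c/2`.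
-/

open MeasureTheory ProbabilityTheory Real
open scoped NNReal ENNReal

noncomputable section

variable {Ω : Type*} [mΩ : MeasurableSpace Ω]

section Freezing

variable {α β γ : Type*} {m mα : MeasurableSpace α} [MeasurableSpace β] [MeasurableSpace γ]
  {P : Measure α} {X : α → β} {Y : α → γ} {F : β × γ → ℝ}

lemma ProbabilityTheory.Indep.indepFun_of_measurable {δ : Type*} [MeasurableSpace δ]
    (hindep : Indep (MeasurableSpace.comap Y inferInstance) m P) {Z : α → δ}
    (hZ : Measurable[m] Z) : IndepFun Z Y P :=
  (indep_of_indep_of_le_right hindep (measurable_iff_comap_le.mp hZ)).symm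

variable [IsProbabilityMeasure P]

namespace ProbabilityTheory.IndepFun

lemma integrable_prod_map (hX : Measurable X) (hY : Measurable Y) (hXY : IndepFun X Y P)
    (hF : StronglyMeasurable F) (hint : Integrable (fun a => F (X a, Y a)) P) :
    Integrable F ((P.map X).prod (P.map Y)) := by
  rw [← (indepFun_iff_map_prod_eq_prod_map_map hX.aemeasurable hY.aemeasurable).mp hXY]
  exact (integrable_map_measure hF.aestronglyMeasurable (hX.prodMk hY).aemeasurable).mpr hint

lemma integrable_integral_comp_prod (hX : Measurable X) (hY : Measurable Y)
    (hXY : IndepFun X Y P) (hF : StronglyMeasurable F)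
    (hint : Integrable (fun a => F (X a, Y a)) P) :
    Integrable (fun a => ∫ y, F (X a, y) ∂(P.map Y)) P :=
  (integrable_map_measure hF.integral_prod_right'.aestronglyMeasurable hX.aemeasurable).mp
    (hXY.integrable_prod_map hX hY hF hint).integral_prod_left

lemma integral_comp_prod (hX : Measurable X) (hY : Measurable Y) (hXY : IndepFun X Y P)
    (hF : StronglyMeasurable F) (hint : Integrable (fun a => F (X a, Y a)) P) :
    ∫ a, F (X a, Y a) ∂P = ∫ a, ∫ y, F (X a, y) ∂(P.map Y) ∂P := by
  rw [← integral_map hX.aemeasurable hF.integral_prod_right'.aestronglyMeasurable,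
    ← integral_prod F (hXY.integrable_prod_map hX hY hF hint),
    ← (indepFun_iff_map_prod_eq_prod_map_map hX.aemeasurable hY.aemeasurable).mp hXY,
    integral_map (hX.prodMk hY).aemeasurable hF.aestronglyMeasurable]

end ProbabilityTheory.IndepFun

lemma condExp_comp_prod_ae_eq_integral_of_indep (hm : m ≤ mα)
    (hX : Measurable[m] X) (hY : Measurable Y)
    (hindep : Indep (MeasurableSpace.comap Y inferInstance) m P) (hF : StronglyMeasurable F)
    (hint : Integrable (fun a => F (X a, Y a)) P) :
    P[fun a => F (X a, Y a) | m] =ᵐ[P] fun a => ∫ y, F (X a, y) ∂(P.map Y) := by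
  have hX₀ : Measurable X := hX.mono hm le_rfl
  refine (ae_eq_condExp_of_forall_setIntegral_eq hm hint (fun A _ _ => ?_) (fun A hA _ => ?_)
    (hF.integral_prod_right'.comp_measurable hX).aestronglyMeasurable).symm
  · exact ((hindep.indepFun_of_measurable hX).integrable_integral_comp_prod hX₀ hY hF
      hint).integrableOn
  -- Multiplying by the indicator of `A` is absorbed into `F` through the `m`-measurable pair
  -- `(𝟙_A, X)`.
  set ξ : α → ℝ × β := fun a => (A.indicator 1 a, X a)
  have hξ : Measurable[m] ξ := (measurable_const.indicator hA).prodMk hX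
  set G : (ℝ × β) × γ → ℝ := fun p => p.1.1 * F (p.1.2, p.2)
  have hG : StronglyMeasurable G :=
    (measurable_fst.comp measurable_fst).stronglyMeasurable.mul
      (hF.comp_measurable ((measurable_snd.comp measurable_fst).prodMk measurable_snd))
  have hGξ : (fun a => G (ξ a, Y a)) = A.indicator fun a => F (X a, Y a) := by
    ext a
    by_cases ha : a ∈ A <;> simp [G, ξ, ha]
  have hA₀ : MeasurableSet A := hm A hA
  rw [← integral_indicator hA₀, ← integral_indicator hA₀, ← hGξ,
    (hindep.indepFun_of_measurable hξ).integral_comp_prod (hξ.mono hm le_rfl) hY hG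
      (by rw [hGξ]; exact hint.indicator hA₀)]
  refine integral_congr_ae (.of_forall fun a => ?_)
  by_cases ha : a ∈ A <;> simp [G, ξ, ha]

end Freezing

lemma integral_gaussianReal_comp_const_mul {r : ℝ} (hr : r ≠ 0) (g : ℝ → ℝ) (v : ℝ) :
    ∫ y, g (r * y) ∂gaussianReal 0 v.toNNReal =
      ∫ y, g y ∂gaussianReal 0 (r ^ 2 * v).toNNReal := by
  have h := gaussianReal_map_const_mul (μ := 0) (v := v.toNNReal) r
  rw [mul_zero] at h
  rw [Real.toNNReal_mul (sq_nonneg r), Real.toNNReal_of_nonneg (sq_nonneg r), ← h]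
  exact ((Homeomorph.mulLeft₀ r hr).measurableEmbedding.integral_map g).symm

lemma integral_gaussianReal_of_eq_mul_exp {g : ℝ → ℝ} {c : ℝ}
    (hg : ∀ x, g x = g 0 * exp (c * x)) (v : ℝ≥0) :
    ∫ x, g x ∂gaussianReal 0 v = g 0 * exp (v * c ^ 2 / 2) := by
  have h := congrFun (mgf_fun_id_gaussianReal (μ := 0) (v := v)) c
  rw [mgf] at h
  rw [integral_congr_ae (.of_forall hg), integral_const_mul, h, zero_mul, zero_add]

lemma eq_mul_exp_of_add_eq_exp_mul {g : ℝ → ℝ} {c : ℝ}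
    (h : ∀ w u, 0 ≤ u → g (w + u) = exp (c * u) * g w) (w : ℝ) :
    g w = g 0 * exp (c * w) := by
  rcases le_total 0 w with hw | hw
  · simpa [mul_comm] using h 0 w hw
  · have := h w (-w) (by linarith)
    rw [add_neg_cancel] at this
    rw [this, mul_right_comm, ← exp_add]
    simp

lemma ae_volume_comp_affine {p : ℝ → Prop} (h : ∀ᵐ x, p x) {r : ℝ} (hr : r ≠ 0)
    (b : ℝ) :
    ∀ᵐ x, p (r * x + b) :=
  ((measurePreserving_add_right volume b).quasiMeasurePreserving.comp
    (Measure.quasiMeasurePreserving_smul volume hr)).ae h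

lemma measurable_natSigma {α : Type*} (W : ℝ → α → ℝ) {s : ℝ} (hs : 0 ≤ s) :
    Measurable[natSigma W s] (W s) :=
  measurable_iff_comap_le.mpr <| le_iSup₂_of_le (f := fun u (_ : u ∈ Set.Icc 0 s) =>
    MeasurableSpace.comap (W u) inferInstance) s ⟨hs, le_rfl⟩ le_rfl

lemma natSigma_le {W : ℝ → Ω → ℝ} (hW : ∀ t, Measurable (W t)) (s : ℝ) :
    natSigma W s ≤ mΩ :=
  iSup₂_le fun u _ => (hW u).comap_le

namespace IsStandardBM

variable {P : Measure Ω} {W : ℝ → Ω → ℝ}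

lemma map_eq_gaussianReal (hBM : IsStandardBM P W) {t : ℝ} (ht : 0 ≤ t) :
    P.map (W t) = gaussianReal 0 t.toNNReal := by
  simpa [hBM.init] using hBM.gauss 0 t le_rfl ht

lemma condExp_natSigma_ae_eq (hBM : IsStandardBM P W) {g : ℝ → ℝ} (hg : Measurable g)
    {s t : ℝ} (hs : 0 ≤ s) (hst : s ≤ t) (hint : Integrable (fun ω => g (W t ω)) P) :
    P[fun ω => g (W t ω) | natSigma W s] =ᵐ[P]
      fun ω => ∫ y, g (W s ω + y) ∂gaussianReal 0 (t - s).toNNReal := by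
  have := hBM.isProb
  have h := condExp_comp_prod_ae_eq_integral_of_indep (natSigma_le hBM.meas s)
    (measurable_natSigma W hs) ((hBM.meas t).sub (hBM.meas s)) (hBM.indep s t hs hst)
    (Y := fun ω => W t ω - W s ω) (F := fun p => g (p.1 + p.2))
    (hg.comp measurable_add).stronglyMeasurable (by simpa using hint)
  rw [hBM.gauss s t hs hst] at h
  simpa using h

lemma ae_integral_gaussianReal_eq_of_martingale (hBM : IsStandardBM P W) {φ : ℝ → ℝ → ℝ}
    (hφ : ∀ t, 0 ≤ t → Measurable (φ t))
    (hmart : Martingale (fun (t : ℝ≥0) ω => φ t (W t ω)) (natFiltration W hBM.meas) P)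
    {s t : ℝ} (hs : 0 ≤ s) (hst : s ≤ t) :
    ∀ᵐ x ∂gaussianReal 0 s.toNNReal,
      ∫ y, φ t (x + y) ∂gaussianReal 0 (t - s).toNNReal = φ s x := by
  have ht := hs.trans hst
  have hmarkov := hBM.condExp_natSigma_ae_eq (hφ t ht) hs hst (hmart.integrable ⟨t, ht⟩)
  have hcond := hmart.condExp_ae_eq (i := ⟨s, hs⟩) (j := ⟨t, ht⟩) hst
  have hmeas : Measurable fun x => ∫ y, φ t (x + y) ∂gaussianReal 0 (t - s).toNNReal :=
    ((hφ t ht).comp measurable_add).stronglyMeasurable.integral_prod_right'.measurable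
  rw [← hBM.map_eq_gaussianReal hs,
    ae_map_iff (hBM.meas s).aemeasurable (measurableSet_eq_fun hmeas (hφ s hs))]
  exact hmarkov.symm.trans hcond

lemma ae_integral_gaussianReal_eq_exp_mul_of_martingale (hBM : IsStandardBM P W)
    {g : ℝ → ℝ → ℝ} {l : ℝ} (hg : ∀ t, 0 ≤ t → Measurable (g t))
    (hmart : Martingale (fun (t : ℝ≥0) ω => g t (W t ω) * exp (-(l * t)))
      (natFiltration W hBM.meas) P)
    {s t : ℝ} (hs : 0 ≤ s) (hst : s ≤ t) :
    ∀ᵐ x ∂gaussianReal 0 s.toNNReal,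
      ∫ y, g t (x + y) ∂gaussianReal 0 (t - s).toNNReal = exp (l * (t - s)) * g s x := by
  filter_upwards [hBM.ae_integral_gaussianReal_eq_of_martingale
    (φ := fun t x => g t x * exp (-(l * t))) (fun t ht => (hg t ht).mul_const _) hmart hs hst]
    with x hx
  rw [integral_mul_const, exp_neg, exp_neg] at hx
  rw [mul_sub, exp_sub]
  field_simp at hx ⊢
  linear_combination hx

lemma integral_gaussianReal_eq_exp_mul_of_martingale (hBM : IsStandardBM P W)
    {g : ℝ → ℝ → ℝ} {l : ℝ} (hg : ∀ t, 0 ≤ t → Measurable (g t))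
    (hmart : Martingale (fun (t : ℝ≥0) ω => g t (W t ω) * exp (-(l * t)))
      (natFiltration W hBM.meas) P)
    {t : ℝ} (ht : 0 ≤ t) :
    ∫ y, g t y ∂gaussianReal 0 t.toNNReal = exp (l * t) * g 0 0 := by
  simpa [ae_dirac_eq] using
    hBM.ae_integral_gaussianReal_eq_exp_mul_of_martingale hg hmart le_rfl ht

lemma apply_add_eq_exp_mul_of_martingale_of_pos (hBM : IsStandardBM P W) {f : ℝ → ℝ → ℝ}
    (hf : ∀ t, 0 ≤ t → Continuous (f t)) {l₁ l₂ : ℝ}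
    (hm₁ : Martingale (fun (t : ℝ≥0) ω => f t (W t ω) * exp (-(l₁ * t)))
      (natFiltration W hBM.meas) P)
    (hm₃ : Martingale (fun (t : ℝ≥0) ω => f (4 * t) (2 * W t ω + t) * exp (-(l₂ * t)))
      (natFiltration W hBM.meas) P)
    {a : ℝ} (ha : 0 < a) (w : ℝ) {u : ℝ} (hu : 0 ≤ u) :
    f a (w + u) = exp ((l₂ - 4 * l₁) * u) * f a w := by
  have hvol {s : ℝ} (hs : 0 < s) : volume ≪ gaussianReal 0 s.toNNReal :=
    gaussianReal_absolutelyContinuous' 0 (by simpa using hs)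
  have h₁ := (hBM.ae_integral_gaussianReal_eq_exp_mul_of_martingale (s := a) (t := a + 4 * u)
    (fun t ht => (hf t ht).measurable) hm₁ ha.le
    (le_add_of_nonneg_right (by positivity))).filter_mono (hvol ha).ae_le
  have h₃ := (hBM.ae_integral_gaussianReal_eq_exp_mul_of_martingale
    (g := fun t x => f (4 * t) (2 * x + t)) (s := a / 4) (t := a / 4 + u)
    (fun t ht => ((hf (4 * t) (by positivity)).comp (by fun_prop)).measurable) hm₃
    (by positivity) (le_add_of_nonneg_right hu)).filter_mono (hvol (by positivity)).ae_le
  simp only [add_sub_cancel_left, mul_add, show 4 * (a / 4) = a by ring] at h₁ h₃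
  have hscale (x : ℝ) :
      ∫ y, f (a + 4 * u) (2 * x + 2 * y + (a / 4 + u)) ∂gaussianReal 0 u.toNNReal
        = ∫ y, f (a + 4 * u) (2 * x + (a / 4 + u) + y) ∂gaussianReal 0 (4 * u).toNNReal := by
    rw [show 4 * u = 2 ^ 2 * u by norm_num, ← integral_gaussianReal_comp_const_mul two_ne_zero]
    ring_nf
  have hae : ∀ᵐ x, exp (l₁ * (4 * u)) * f a (2 * x + (a / 4 + u))
      = exp (l₂ * u) * f a (2 * x + a / 4) := by
    filter_upwards [ae_volume_comp_affine h₁ two_ne_zero (a / 4 + u), h₃] with x h1 h3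
    rw [← h1, ← h3, hscale]
  have hfa := hf a ha.le
  have hx := congrFun ((Continuous.ae_eq_iff_eq volume (by fun_prop) (by fun_prop)).mp hae)
    ((w - a / 4) / 2)
  simp only [show 2 * ((w - a / 4) / 2) + (a / 4 + u) = w + u by ring,
    show 2 * ((w - a / 4) / 2) + a / 4 = w by ring] at hx
  rw [show (l₂ - 4 * l₁) * u = l₂ * u - l₁ * (4 * u) by ring, exp_sub, div_mul_eq_mul_div,
    ← hx]
  field_simp

lemma apply_add_eq_exp_mul_of_martingale (hBM : IsStandardBM P W) {f : ℝ → ℝ → ℝ}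
    (hcont : ContinuousOn (Function.uncurry f) (Set.Ici 0 ×ˢ Set.univ)) {l₁ l₂ : ℝ}
    (hm₁ : Martingale (fun (t : ℝ≥0) ω => f t (W t ω) * exp (-(l₁ * t)))
      (natFiltration W hBM.meas) P)
    (hm₃ : Martingale (fun (t : ℝ≥0) ω => f (4 * t) (2 * W t ω + t) * exp (-(l₂ * t)))
      (natFiltration W hBM.meas) P)
    {a : ℝ} (ha : 0 ≤ a) (w : ℝ) {u : ℝ} (hu : 0 ≤ u) :
    f a (w + u) = exp ((l₂ - 4 * l₁) * u) * f a w := by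
  have hslice (t : ℝ) (ht : 0 ≤ t) : Continuous (f t) :=
    continuousOn_univ.mp (hcont.uncurry_left t ht)
  have htime (x : ℝ) : ContinuousOn (f · x) (Set.Ici 0) :=
    hcont.uncurry_right x (Set.mem_univ x)
  have hpos : Set.EqOn (f · (w + u)) (fun a => exp ((l₂ - 4 * l₁) * u) * f a w) (Set.Ioi 0) :=
    fun a ha => hBM.apply_add_eq_exp_mul_of_martingale_of_pos hslice hm₁ hm₃ ha w hu
  exact hpos.of_subset_closure (htime _) (continuousOn_const.mul (htime w))
    Set.Ioi_subset_Ici_self (closure_Ioi (0 : ℝ)).superset ha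

lemma apply_zero_eq_exp_mul_of_martingale (hBM : IsStandardBM P W) {g : ℝ → ℝ → ℝ}
    {l c : ℝ} (hg : ∀ t, 0 ≤ t → Measurable (g t))
    (hexp : ∀ t, 0 ≤ t → ∀ x, g t x = g t 0 * exp (c * x))
    (hmart : Martingale (fun (t : ℝ≥0) ω => g t (W t ω) * exp (-(l * t)))
      (natFiltration W hBM.meas) P)
    {t : ℝ} (ht : 0 ≤ t) :
    g t 0 = exp ((l - c ^ 2 / 2) * t) * g 0 0 := by
  have h := hBM.integral_gaussianReal_eq_exp_mul_of_martingale hg hmart ht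
  rw [integral_gaussianReal_of_eq_mul_exp (hexp t ht), Real.coe_toNNReal _ ht] at h
  rw [sub_mul, exp_sub, div_mul_eq_mul_div, ← h]
  field_simp

end IsStandardBM

theorem stmt14_general (P : Measure Ω) (W : ℝ → Ω → ℝ) (hBM : IsStandardBM P W)
    (f : ℝ → ℝ → ℝ)
    (hcont : ContinuousOn (Function.uncurry f) (Set.Ici (0 : ℝ) ×ˢ Set.univ))
    (hone : f 0 0 = 1)
    (l₁ l₂ : ℝ)
    (hm₁ : Martingale (fun (t : ℝ≥0) ω => f t (W t ω) * Real.exp (-(l₁ * t)))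
      (natFiltration W hBM.meas) P)
    (hm₂ : Martingale (fun (t : ℝ≥0) ω => f t (W t ω) ^ 2 * Real.exp (-(l₂ * t)))
      (natFiltration W hBM.meas) P)
    (hm₃ : Martingale (fun (t : ℝ≥0) ω => f (4 * t) (2 * W t ω + t) * Real.exp (-(l₂ * t)))
      (natFiltration W hBM.meas) P) :
    ∃ c : ℝ, ∀ u v : ℝ, 0 ≤ u → f u v = Real.exp (c * v - c / 2 * u) := by
  set c := l₂ - 4 * l₁ with hc
  have hform (t : ℝ) (ht : 0 ≤ t) (x : ℝ) : f t x = f t 0 * exp (c * x) :=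
    eq_mul_exp_of_add_eq_exp_mul
      (fun w _ hu => hBM.apply_add_eq_exp_mul_of_martingale hcont hm₁ hm₃ ht w hu) x
  have hmeas (t : ℝ) (ht : 0 ≤ t) : Measurable (f t) :=
    (continuousOn_univ.mp (hcont.uncurry_left t ht)).measurable
  have hf₀ (t : ℝ) (ht : 0 ≤ t) : f t 0 = exp ((l₁ - c ^ 2 / 2) * t) := by
    simpa [hone] using hBM.apply_zero_eq_exp_mul_of_martingale hmeas hform hm₁ ht
  have hl₂ : l₂ = 2 * l₁ + c ^ 2 := by
    have hsq (t : ℝ) (ht : 0 ≤ t) (x : ℝ) : f t x ^ 2 = f t 0 ^ 2 * exp (2 * c * x) := by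
      rw [hform t ht x, mul_pow, sq (exp _), ← exp_add]
      ring_nf
    have h := hBM.apply_zero_eq_exp_mul_of_martingale
      (fun t ht => (hmeas t ht).pow_const 2) hsq hm₂ zero_le_one
    rw [hf₀ 1 zero_le_one, hone, ← exp_nat_mul] at h
    simp only [one_pow, mul_one, Nat.cast_ofNat, exp_eq_exp] at h
    linear_combination -h
  refine ⟨c, fun u v hu => ?_⟩
  rw [hform u hu v, hf₀ u hu, ← exp_add]
  congr 1
  linear_combination (u / 2) * hl₂ + (u / 2) * hc

/-- If `f` is continuous, strictly positive, `f (0,0) = 1`, and the three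
processes `f (t, W t) e^{−λ₁ t}`, `f (t, W t)² e^{−λ₂ t}` and `f (4t, 2 W t + t) e^{−λ₂ t}`
are martingales with respect to the natural filtration of `W` for some constants `λ₁, λ₂`,
then `f (u, v) = exp (c v − (c/2) u)` for some constant `c`. -/
theorem stmt14 (P : Measure Ω) (W : ℝ → Ω → ℝ) (hBM : IsStandardBM P W)
    (f : ℝ → ℝ → ℝ)
    (hcont : ContinuousOn (Function.uncurry f) (Set.Ici (0 : ℝ) ×ˢ Set.univ))
    (hpos : ∀ u v : ℝ, 0 ≤ u → 0 < f u v)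
    (hone : f 0 0 = 1)
    (l₁ l₂ : ℝ)
    (hm₁ : Martingale (fun (t : ℝ≥0) ω => f t (W t ω) * Real.exp (-(l₁ * t)))
      (natFiltration W hBM.meas) P)
    (hm₂ : Martingale (fun (t : ℝ≥0) ω => f t (W t ω) ^ 2 * Real.exp (-(l₂ * t)))
      (natFiltration W hBM.meas) P)
    (hm₃ : Martingale (fun (t : ℝ≥0) ω => f (4 * t) (2 * W t ω + t) * Real.exp (-(l₂ * t)))
      (natFiltration W hBM.meas) P) :
    ∃ c : ℝ, ∀ u v : ℝ, 0 ≤ u → f u v = Real.exp (c * v - c / 2 * u) :=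
  stmt14_general P W hBM f hcont hone l₁ l₂ hm₁ hm₂ hm₃
end
end
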